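/- arXiv:2211.14598 — 8 statements merged into one kernel-verified Lean document; each statement's English description precedes it below -/
import Mathlib

section
/- Let G be a topological group. If the countable power G^ω is selectively pseudocompact, then G^κ is selectively pseudocompact for every infinite cardinal κ. -/
open Filter Topology

/-- A free (nonprincipal) ultrafilter on ℕ. -/
def FreeUltrafilter (p : Ultrafilter ℕ) : Prop := ∀ n : ℕ, p ≠ pure n

/-- `l` is the `p`-limit of the sequence `x`. -/
def IsPLimit {X : Type*} [TopologicalSpace X] (p : Ultrafilter ℕ) (x : ℕ → X) (l : X) : Prop :=
  ∀ U ∈ nhds l, {n : ℕ | x n ∈ U} ∈ p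

/-- A topological space is selectively pseudocompact. -/
def SelectivelyPseudocompact (X : Type*) [TopologicalSpace X] : Prop :=
  ∀ U : ℕ → Set X, (∀ n, IsOpen (U n)) → (∀ n, (U n).Nonempty) →
    ∃ (x : ℕ → X) (l : X) (p : Ultrafilter ℕ),
      FreeUltrafilter p ∧ (∀ n, x n ∈ U n) ∧ IsPLimit p x l

/-- A topological space is countably compact: every infinite subset has an accumulation point. -/
def CountablyCompact (X : Type*) [TopologicalSpace X] : Prop :=
  ∀ S : Set X, S.Infinite → ∃ x : X, AccPt x (Filter.principal S)

/-- A topological space is countably pracompact. -/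
def CountablyPracompact (X : Type*) [TopologicalSpace X] : Prop :=
  ∃ D : Set X, Dense D ∧
    ∀ S : Set X, S ⊆ D → S.Infinite → ∃ x : X, AccPt x (Filter.principal S)

/-- A selective ultrafilter on ℕ. -/
def SelectiveUltrafilter (p : Ultrafilter ℕ) : Prop :=
  FreeUltrafilter p ∧
    ∀ A : ℕ → Set ℕ, Pairwise (Function.onFun Disjoint A) → (⋃ n, A n) = Set.univ →
      (∃ n, A n ∈ p) ∨ ∃ B ∈ p, ∀ n, (B ∩ A n).ncard = 1

/-- Rudin–Keisler order on ultrafilters on ℕ. -/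
def RKle (p q : Ultrafilter ℕ) : Prop := ∃ f : ℕ → ℕ, Ultrafilter.map f q = p

/-- RK-incomparability. -/
def RKIncomparable (p q : Ultrafilter ℕ) : Prop := ¬ RKle p q ∧ ¬ RKle q p

/-- The restriction of a finitely supported `ZMod 2`-valued function (a finite subset of `X`)
to a set `S` (the intersection with `S`). -/
noncomputable def restrictSet {X : Type*} (S : Set X) (f : X →₀ ZMod 2) : X →₀ ZMod 2 :=
  letI := Classical.decPred (· ∈ S)
  Finsupp.filter (· ∈ S) f

/-- A topological space is pseudocompact: every continuous real-valued function is bounded. -/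
def Pseudocompact (X : Type*) [TopologicalSpace X] : Prop :=
  ∀ f : X → ℝ, Continuous f → ∃ M : ℝ, ∀ x : X, |f x| ≤ M

/-!
An open set of `G^κ` contains, around each of its points, a basic open set depending on finitely
many coordinates, so countably many nonempty open sets `Uₙ` are controlled by a countable set of
coordinates, which lies in the range of some `e : ℕ → κ`. Precomposition with a right inverse of
`e` is then a continuous map `G^ω → G^κ` under which every `Uₙ` has a nonempty preimage, and
continuous maps carry `p`-limits to `p`-limits.
-/

theorem IsPLimit.map {X Y : Type*} [TopologicalSpace X] [TopologicalSpace Y] {f : X → Y}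
    (hf : Continuous f) {p : Ultrafilter ℕ} {x : ℕ → X} {l : X} (h : IsPLimit p x l) :
    IsPLimit p (f ∘ x) (f l) :=
  fun _ hV => h _ (hf.continuousAt hV)

theorem SelectivelyPseudocompact.of_forall_exists_continuous {X Y : Type*} [TopologicalSpace X]
    [TopologicalSpace Y] (hX : SelectivelyPseudocompact X)
    (hY : ∀ U : ℕ → Set Y, (∀ n, IsOpen (U n)) → (∀ n, (U n).Nonempty) →
      ∃ f : X → Y, Continuous f ∧ ∀ n, (f ⁻¹' U n).Nonempty) :
    SelectivelyPseudocompact Y := by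
  intro U hU hne
  obtain ⟨f, hf, hfU⟩ := hY U hU hne
  obtain ⟨x, l, p, hp, hx, hl⟩ := hX (fun n => f ⁻¹' U n) (fun n => (hU n).preimage hf) hfU
  exact ⟨f ∘ x, f l, p, hp, hx, hl.map hf⟩

theorem exists_finset_forall_eq_mem {ι : Type*} {X : ι → Type*} [∀ i, TopologicalSpace (X i)]
    {U : Set (∀ i, X i)} (hU : IsOpen U) {y : ∀ i, X i} (hy : y ∈ U) :
    ∃ I : Finset ι, ∀ g : ∀ i, X i, (∀ i ∈ I, g i = y i) → g ∈ U := by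
  obtain ⟨I, u, hu, hIU⟩ := isOpen_pi_iff.1 hU y hy
  exact ⟨I, fun g hg => hIU fun i hi => hg i hi ▸ (hu i hi).2⟩

theorem SelectivelyPseudocompact.pi_of_nat {ι G : Type*} [Nonempty ι] [TopologicalSpace G]
    (h : SelectivelyPseudocompact (ℕ → G)) : SelectivelyPseudocompact (ι → G) := by
  refine h.of_forall_exists_continuous fun U hU hne => ?_
  choose y hy using hne
  choose I hI using fun n => exists_finset_forall_eq_mem (hU n) (hy n)
  obtain ⟨e, he⟩ := Set.countable_iff_exists_subset_range.1
    (Set.countable_iUnion fun n => (I n).countable_toSet)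
  refine ⟨fun g => g ∘ Function.invFun e, by fun_prop, fun n => ⟨y n ∘ e, hI n _ fun i hi => ?_⟩⟩
  exact congrArg (y n) (Function.invFun_eq (he (Set.mem_iUnion.2 ⟨n, hi⟩)))

theorem stmt0_general {G : Type*} [TopologicalSpace G]
    (h : SelectivelyPseudocompact (ℕ → G)) :
    ∀ κ : Cardinal.{0}, Cardinal.aleph0 ≤ κ → SelectivelyPseudocompact (κ.out → G) := by
  intro κ hκ
  have : Nonempty κ.out := Cardinal.mk_ne_zero_iff.1 <| by
    rw [Cardinal.mk_out]
    exact (Cardinal.aleph0_pos.trans_le hκ).ne'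
  exact h.pi_of_nat

/-- If `G^ω` is selectively pseudocompact, then `G^κ` is selectively
pseudocompact for every infinite cardinal `κ`. -/
theorem stmt0 {G : Type*} [Group G] [TopologicalSpace G] [IsTopologicalGroup G]
    (h : SelectivelyPseudocompact (ℕ → G)) :
    ∀ κ : Cardinal.{0}, Cardinal.aleph0 ≤ κ → SelectivelyPseudocompact (κ.out → G) :=
  stmt0_general h
end

section
/- Let G be a topological group with identity 0 such that G^ω is countably compact, and let κ be an infinite cardinal. Then the Σ-product Σ = {g ∈ G^κ : the set of coordinates α with g(α) ≠ 0 is countable} is a dense subset of G^κ such that every infinite subset of Σ has an accumulation point in G^κ; in particular, G^κ is countably pracompact. -/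
open Filter Topology

/-!
Finitely supported functions are already dense in `G^κ`. An infinite subset of the Σ-product
contains a countable infinite one, whose supports all lie in one countably infinite set `C` of
coordinates; so it lies in the image of extension by zero `G^C → G^κ`, a continuous injection.
Since `G^C ≃ₜ G^ω` is countably compact and continuous injections carry accumulation points to
accumulation points, the subset accumulates in `G^κ`.
-/

def sigmaProduct (ι G : Type*) [Zero G] : Set (ι → G) := {g | (Function.support g).Countable}

section ExtendByZero

variable {ι G : Type*} [Zero G] (s : Set ι)

open Classical in
noncomputable def extendByZero (y : s → G) : ι → G :=
  fun α => if h : α ∈ s then y ⟨α, h⟩ else 0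

theorem domRestrict_extendByZero (y : s → G) : s.domRestrict (extendByZero s y) = y := by
  funext α
  simp [extendByZero, Set.domRestrict_apply]

theorem extendByZero_injective : Function.Injective (extendByZero (G := G) s) :=
  Function.LeftInverse.injective (domRestrict_extendByZero s)

theorem extendByZero_domRestrict {g : ι → G} (hg : Function.support g ⊆ s) :
    extendByZero s (s.domRestrict g) = g := by
  funext α
  by_cases hα : α ∈ s
  · simp [extendByZero, hα, Set.domRestrict_apply]
  · simpa [extendByZero, hα] using (Function.notMem_support.1 (mt (@hg α) hα)).symm

theorem continuous_extendByZero [TopologicalSpace G] :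
    Continuous (extendByZero (G := G) s) := by
  refine continuous_pi fun α => ?_
  by_cases hα : α ∈ s
  · simpa [extendByZero, hα] using continuous_apply (A := fun _ : s => G) ⟨α, hα⟩
  · simpa [extendByZero, hα] using continuous_const

end ExtendByZero

section CountablyCompact

variable {X Y : Type*} [TopologicalSpace X] [TopologicalSpace Y]

theorem CountablyCompact.exists_accPt_of_subset_range (hX : CountablyCompact X) {f : X → Y}
    (hf : Continuous f) (hinj : Function.Injective f) {S : Set Y} (hS : S ⊆ Set.range f)
    (hinf : S.Infinite) : ∃ y, AccPt y (𝓟 S) := by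
  have hpre : f '' (f ⁻¹' S) = S := Set.image_preimage_eq_of_subset hS
  obtain ⟨x, hx⟩ := hX (f ⁻¹' S) (Set.Infinite.of_image f (hpre.symm ▸ hinf))
  refine ⟨f x, ?_⟩
  simpa [Filter.map_principal, hpre] using hx.map hf.continuousAt hinj

theorem CountablyCompact.of_homeomorph (hX : CountablyCompact X) (e : X ≃ₜ Y) :
    CountablyCompact Y := fun _ hS =>
  hX.exists_accPt_of_subset_range e.continuous e.injective (by simp [e.surjective.range_eq]) hS

theorem CountablyCompact.pi_of_countable {ι G : Type*} [TopologicalSpace G] [Countable ι]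
    [Infinite ι] (h : CountablyCompact (ℕ → G)) : CountablyCompact (ι → G) :=
  let e : ℕ ≃ ι := (nonempty_equiv_of_countable.some : ι ≃ ℕ).symm
  h.of_homeomorph (Homeomorph.piCongrLeft (Y := fun _ => G) e)

end CountablyCompact

section SigmaProduct

variable {ι G : Type*} [Zero G] [TopologicalSpace G]

theorem dense_sigmaProduct : Dense (sigmaProduct ι G) := by
  classical
  refine dense_iff_inter_open.2 fun U hU ⟨x, hx⟩ => ?_
  obtain ⟨I, u, hu, hsub⟩ := isOpen_pi_iff.1 hU x hx
  refine ⟨I.piecewise x 0, hsub fun α hα => ?_, (I.finite_toSet.countable).mono fun α hα => ?_⟩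
  · simpa [Finset.piecewise_eq_of_mem _ _ _ (Finset.mem_coe.1 hα)] using (hu α hα).2
  · by_contra hαI
    exact hα (Finset.piecewise_eq_of_notMem _ _ _ hαI)

theorem exists_accPt_of_subset_sigmaProduct [Infinite ι] (h : CountablyCompact (ℕ → G))
    {S : Set (ι → G)} (hS : S ⊆ sigmaProduct ι G) (hinf : S.Infinite) :
    ∃ x, AccPt x (𝓟 S) := by
  obtain ⟨T, hTS, hTcount, hTinf⟩ := hinf.exists_subset_countable_infinite
  set C : Set ι := (⋃ t ∈ T, Function.support t) ∪ Set.range (Infinite.natEmbedding ι)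
  have hCcount : C.Countable :=
    (hTcount.biUnion fun t ht => hS (hTS ht)).union (Set.countable_range _)
  have hCinf : C.Infinite := Set.Infinite.mono Set.subset_union_right
    (Set.infinite_range_of_injective (Infinite.natEmbedding ι).injective)
  have := hCcount.to_subtype
  have := hCinf.to_subtype
  have hTrange : T ⊆ Set.range (extendByZero C) := fun t ht =>
    ⟨_, extendByZero_domRestrict C (Set.subset_union_left.trans' (Set.subset_biUnion_of_mem ht))⟩
  obtain ⟨x, hx⟩ := (CountablyCompact.pi_of_countable (ι := C) h).exists_accPt_of_subset_range
    (continuous_extendByZero C) (extendByZero_injective C) hTrange hTinf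
  exact ⟨x, hx.mono (Filter.principal_mono.2 hTS)⟩

end SigmaProduct

theorem stmt1_general {G : Type*} [AddGroup G] [TopologicalSpace G]
    (h : CountablyCompact (ℕ → G)) (κ : Cardinal.{0}) (hκ : Cardinal.aleph0 ≤ κ) :
    (Dense {g : κ.out → G | {α : κ.out | g α ≠ 0}.Countable} ∧
      ∀ S : Set (κ.out → G), S ⊆ {g : κ.out → G | {α : κ.out | g α ≠ 0}.Countable} →
        S.Infinite → ∃ x : κ.out → G, AccPt x (Filter.principal S)) ∧
    CountablyPracompact (κ.out → G) := by
  have : Infinite κ.out := Cardinal.infinite_iff.2 (by rwa [Cardinal.mk_out])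
  have hdense : Dense (sigmaProduct κ.out G) := dense_sigmaProduct
  have hacc : ∀ S ⊆ sigmaProduct κ.out G, S.Infinite → ∃ x, AccPt x (𝓟 S) :=
    fun _ hS hinf => exists_accPt_of_subset_sigmaProduct h hS hinf
  exact ⟨⟨hdense, hacc⟩, _, hdense, hacc⟩

/-- If `G^ω` is countably compact, the Σ-product is a dense subset of `G^κ`
every infinite subset of which has an accumulation point; in particular `G^κ` is
countably pracompact. -/
theorem stmt1 {G : Type*} [AddGroup G] [TopologicalSpace G] [IsTopologicalAddGroup G]
    (h : CountablyCompact (ℕ → G)) (κ : Cardinal.{0}) (hκ : Cardinal.aleph0 ≤ κ) :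
    (Dense {g : κ.out → G | {α : κ.out | g α ≠ 0}.Countable} ∧
      ∀ S : Set (κ.out → G), S ⊆ {g : κ.out → G | {α : κ.out | g α ≠ 0}.Countable} →
        S.Infinite → ∃ x : κ.out → G, AccPt x (Filter.principal S)) ∧
    CountablyPracompact (κ.out → G) :=
  stmt1_general h κ hκ
end

section
/- Let V be a vector space over the two-element field 𝔽₂ and let A, B, C ⊆ V be subsets with A finite. If both A ∪ C and B ∪ C are linearly independent sets, then there exists a subset B' ⊆ B with |B'| ≤ |A| such that A ∪ C ∪ (B \ B') is linearly independent. -/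
open Filter Topology

/-- the linear algebra exchange lemma for subsets of an `𝔽₂`-vector space. -/
theorem stmt2 {V : Type*} [AddCommGroup V] [Module (ZMod 2) V]
    (A B C : Set V) (hA : A.Finite)
    (hAC : LinearIndependent (ZMod 2) ((↑) : ↥(A ∪ C) → V))
    (hBC : LinearIndependent (ZMod 2) ((↑) : ↥(B ∪ C) → V)) :
    ∃ B' ⊆ B, B'.Finite ∧ B'.ncard ≤ A.ncard ∧
      LinearIndependent (ZMod 2) ((↑) : ↥(A ∪ C ∪ (B \ B')) → V) := by
  classical
  revert hAC
  refine Set.Finite.induction_on A hA ?_ ?_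
  · intro hAC
    refine ⟨∅, by simp, Set.finite_empty, by simp, ?_⟩
    exact LinearIndepOn.mono (v := id) hBC (by intro x hx; simp at hx ⊢; tauto)
  · intro a A₀ haA₀ hA₀fin IH hAC
    have hAC₀ : LinearIndependent (ZMod 2) ((↑) : ↥(A₀ ∪ C) → V) :=
      LinearIndepOn.mono (v := id) hAC (Set.union_subset_union_left C (Set.subset_insert a A₀))
    obtain ⟨B', hB'B, hfin, hcard, hind⟩ := IH hAC₀
    set S : Set V := A₀ ∪ C ∪ (B \ B') with hS
    by_cases haS : a ∈ S
    · refine ⟨B', hB'B, hfin, hcard.trans (Set.ncard_le_ncard (Set.subset_insert a A₀)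
        (hA₀fin.insert a)), ?_⟩
      have : insert a A₀ ∪ C ∪ (B \ B') = S := by
        rw [hS]; rw [Set.insert_union, Set.insert_union, Set.insert_eq_self.mpr haS]
      rw [this]; exact hind
    · by_cases ha : a ∈ Submodule.span (ZMod 2) S
      · -- exchange case
        rw [Submodule.mem_span_set] at ha
        obtain ⟨l, hls, hla⟩ := ha
        have haAC : a ∉ A₀ ∪ C := fun h => haS (Or.inl h)
        have hnspan : a ∉ Submodule.span (ZMod 2) (A₀ ∪ C) := by
          have h1 : insert a A₀ ∪ C = insert a (A₀ ∪ C) := by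
            rw [Set.insert_union]
          have h2 := hAC
          rw [h1] at h2
          exact ((linearIndepOn_id_insert haAC).mp h2).2
        have hb : ∃ b ∈ l.support, b ∉ A₀ ∪ C := by
          by_contra h
          push_neg at h
          exact hnspan (Submodule.mem_span_set.mpr ⟨l, fun x hx => h x hx, hla⟩)
        obtain ⟨b, hbsupp, hbAC⟩ := hb
        have hbS : b ∈ S := hls hbsupp
        have hbB : b ∈ B \ B' := by
          rcases hbS with h | h
          · exact absurd h hbAC
          · exact h
        -- b is not in the span of S \ {b}
        have hbns : b ∉ Submodule.span (ZMod 2) (S \ {b}) := by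
          have h1 : S = insert b (S \ {b}) := by
            rw [Set.insert_diff_singleton, Set.insert_eq_self.mpr hbS]
          have h2 := hind
          rw [h1] at h2
          exact ((linearIndepOn_id_insert (fun h => h.2 rfl)).mp h2).2
        -- a ∉ span (S \ {b})
        have hna : a ∉ Submodule.span (ZMod 2) (S \ {b}) := by
          intro haSb
          apply hbns
          have hrest : (Finsupp.erase b l).sum (fun v c => c • v) ∈
              Submodule.span (ZMod 2) (S \ {b}) := by
            refine Submodule.mem_span_set.mpr ⟨Finsupp.erase b l, ?_, rfl⟩
            rw [Finsupp.support_erase]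
            intro x hx
            simp only [Finset.coe_erase, Set.mem_diff, Set.mem_singleton_iff] at hx ⊢
            exact ⟨hls hx.1, hx.2⟩
          have hsum : l b • b + (Finsupp.erase b l).sum (fun v c => c • v) = a := by
            rw [← hla]
            conv_rhs => rw [← Finsupp.single_add_erase b l]
            rw [Finsupp.sum_add_index' (fun v => zero_smul _ v)
              (fun v c₁ c₂ => add_smul c₁ c₂ v)]
            congr 1
            rw [Finsupp.sum_single_index (zero_smul _ b)]
          have hmem : l b • b ∈ Submodule.span (ZMod 2) (S \ {b}) := by
            have : l b • b = a - (Finsupp.erase b l).sum (fun v c => c • v) := by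
              rw [← hsum]; abel
            rw [this]
            exact Submodule.sub_mem _ haSb hrest
          have hlb : l b ≠ 0 := Finsupp.mem_support_iff.mp hbsupp
          rwa [Submodule.smul_mem_iff _ hlb] at hmem
        have hd : LinearIndependent (ZMod 2) ((↑) : ↥(S \ {b}) → V) :=
          LinearIndepOn.mono (v := id) hind Set.diff_subset
        have hfinal := LinearIndepOn.id_insert hd hna
        refine ⟨insert b B', Set.insert_subset hbB.1 hB'B, hfin.insert b, ?_, ?_⟩
        · calc (insert b B').ncard ≤ B'.ncard + 1 := Set.ncard_insert_le b B'
            _ ≤ A₀.ncard + 1 := by omega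
            _ = (insert a A₀).ncard := (Set.ncard_insert_of_notMem haA₀ hA₀fin).symm
        · have hab : a ≠ b := fun h => haS (h ▸ hbS)
          have hbA0 : b ∉ A₀ := fun h => hbAC (Or.inl h)
          have hbC : b ∉ C := fun h => hbAC (Or.inr h)
          have heq : insert a A₀ ∪ C ∪ (B \ insert b B') = insert a (S \ {b}) := by
            ext x
            simp only [hS, Set.mem_union, Set.mem_insert_iff, Set.mem_diff,
              Set.mem_singleton_iff]
            by_cases hxb : x = b
            · subst hxb
              simp [hbA0, hbC, hab.symm]
            · tauto
          rw [heq]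
          exact hfinal
      · -- a not in span S: just add a
        refine ⟨B', hB'B, hfin, hcard.trans (Set.ncard_le_ncard (Set.subset_insert a A₀)
          (hA₀fin.insert a)), ?_⟩
        have heq : insert a A₀ ∪ C ∪ (B \ B') = insert a S := by
          rw [hS, Set.insert_union, Set.insert_union]
        rw [heq]
        exact LinearIndepOn.id_insert hind ha
end

section
/- Let X be an infinite set and let X_0, …, X_n be a partition of X. Let (x_k)_{k∈ℕ} and (y_k)_{k∈ℕ} be sequences in the Boolean group [X]^{<ω} such that: (1) the combined family consisting of all x_k and all y_k (indexed by ℕ ⊔ ℕ) is linearly independent; and (2) for every p ∈ {0,…,n}, both the family (x_k ∩ X_p)_{k∈ℕ} and the family (y_k ∩ X_p)_{k∈ℕ} are linearly independent. Then there exist a strictly increasing sequence (k_m)_{m∈ℕ} of naturals and an index n₀ ∈ {0,…,n} such that the combined family consisting of all x_{k_m} ∩ X_{n₀} and all y_{k_m} ∩ X_{n₀} (m ∈ ℕ) is linearly independent. -/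
open Filter Topology

set_option linter.unusedSectionVars false




section Aux

variable {X : Type*} {ι : Type*} {M : Type*} [AddCommGroup M] [Module (ZMod 2) M]

private lemma char2_add_self (v : M) : v + v = 0 := by
  have : ((2 : ZMod 2) : ZMod 2) • v = v + v := by
    have : (2 : ZMod 2) = 1 + 1 := by decide
    rw [this, add_smul, one_smul]
  rw [← this, show (2 : ZMod 2) = 0 by decide, zero_smul]

private lemma li_iff (f : ι → M) :
    LinearIndependent (ZMod 2) f ↔ ∀ s : Finset ι, ∑ i ∈ s, f i = 0 → s = ∅ := by
  classical
  constructor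
  · intro h s hs
    rw [linearIndependent_iff] at h
    have hl := h (∑ i ∈ s, Finsupp.single i 1) ?_
    · by_contra hne
      obtain ⟨i, hi⟩ := Finset.nonempty_iff_ne_empty.mpr hne
      have h0 : (∑ j ∈ s, Finsupp.single j (1 : ZMod 2)) i = 0 := by rw [hl]; rfl
      rw [Finsupp.finset_sum_apply, Finset.sum_eq_single i
        (fun b _ hb => Finsupp.single_eq_of_ne' hb) (fun h' => absurd hi h')] at h0
      simp at h0
    · rw [map_sum]
      simpa using hs
  · intro h
    rw [linearIndependent_iff]
    intro l hl
    have h1 : ∀ b : ZMod 2, b ≠ 0 → b = 1 := by decide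
    have hsum : ∑ i ∈ l.support, f i = 0 := by
      rw [Finsupp.linearCombination_apply, Finsupp.sum] at hl
      calc ∑ i ∈ l.support, f i = ∑ i ∈ l.support, l i • f i := by
            refine Finset.sum_congr rfl fun i hi => ?_
            rw [h1 _ (Finsupp.mem_support_iff.mp hi), one_smul]
        _ = 0 := hl
    exact Finsupp.support_eq_empty.mp (h _ hsum)

private lemma li_sum_iff (f g : ι → M) :
    LinearIndependent (ZMod 2) (Sum.elim f g) ↔
      ∀ A B : Finset ι, (∑ i ∈ A, f i) + (∑ i ∈ B, g i) = 0 → A = ∅ ∧ B = ∅ := by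
  rw [li_iff]
  constructor
  · intro h A B hAB
    have := h (A.disjSum B) (by rw [Finset.sum_sumElim]; exact hAB)
    exact Finset.disjSum_eq_empty.mp this
  · intro h s hs
    have hs' : (s.toLeft.disjSum s.toRight) = s := Finset.toLeft_disjSum_toRight
    obtain ⟨h1, h2⟩ := h s.toLeft s.toRight (by rw [← Finset.sum_sumElim, hs']; exact hs)
    rw [← hs', h1, h2]
    simp

private lemma restrictSet_apply (S : Set X) (f : X →₀ ZMod 2) (a : X) [Decidable (a ∈ S)] :
    restrictSet S f a = if a ∈ S then f a else 0 := by
  have h : restrictSet S f a = @ite _ (a ∈ S) (Classical.decPred (· ∈ S) a) (f a) 0 := rfl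
  rw [h]
  congr 1

private lemma restrictSet_add (S : Set X) (f g : X →₀ ZMod 2) :
    restrictSet S (f + g) = restrictSet S f + restrictSet S g := by
  classical
  ext a
  simp only [restrictSet_apply, Finsupp.add_apply]
  split <;> simp

private lemma sum_restrict_eq {n : ℕ} (Xp : Fin (n + 1) → Set X)
    (hdisj : Pairwise (Function.onFun Disjoint Xp)) (hcover : (⋃ i, Xp i) = Set.univ)
    (f : X →₀ ZMod 2) : ∑ p : Fin (n + 1), restrictSet (Xp p) f = f := by
  classical
  ext a
  rw [Finsupp.finset_sum_apply]
  obtain ⟨p₀, hp₀⟩ : ∃ p, a ∈ Xp p := by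
    have : a ∈ ⋃ i, Xp i := by rw [hcover]; trivial
    exact Set.mem_iUnion.mp this
  rw [Finset.sum_eq_single p₀]
  · rw [restrictSet_apply, if_pos hp₀]
  · intro q _ hq
    rw [restrictSet_apply, if_neg (fun ha => Set.disjoint_left.mp (hdisj hq) ha hp₀)]
  · exact fun h => absurd (Finset.mem_univ p₀) h

private def GoodAux {X : Type*} (f g : ℕ → (X →₀ ZMod 2)) (F : Finset ℕ) : Prop :=
  ∀ A B : Finset ℕ, A ⊆ F → B ⊆ F → (∑ j ∈ A, f j) + (∑ j ∈ B, g j) = 0 → A = ∅ ∧ B = ∅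

private lemma greedy (f g : ℕ → (X →₀ ZMod 2))
    (H : ∀ k : ℕ → ℕ, StrictMono k →
      ¬ LinearIndependent (ZMod 2) (Sum.elim (fun m => f (k m)) (fun m => g (k m)))) :
    ∃ F : Finset ℕ, ∃ N : ℕ, GoodAux f g F ∧ ∀ m, N ≤ m → ¬ GoodAux f g (insert m F) := by
  by_contra hc
  push_neg at hc
  have hc' : ∀ (q : {q : Finset ℕ × ℕ // GoodAux f g q.1}),
      ∃ m, q.1.2 ≤ m ∧ GoodAux f g (insert m q.1.1) := fun q => hc q.1.1 q.1.2 q.2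
  choose step hstep1 hstep2 using hc'
  have good_empty : GoodAux f g (∅ : Finset ℕ) := by
    intro A B hA hB _
    exact ⟨Finset.subset_empty.mp hA, Finset.subset_empty.mp hB⟩
  let next : {q : Finset ℕ × ℕ // GoodAux f g q.1} → {q : Finset ℕ × ℕ // GoodAux f g q.1} :=
    fun q => ⟨(insert (step q) q.1.1, step q + 1), hstep2 q⟩
  let chain : ℕ → {q : Finset ℕ × ℕ // GoodAux f g q.1} :=
    fun t => next^[t] ⟨(∅, 0), good_empty⟩
  let k : ℕ → ℕ := fun t => step (chain t)
  have hchainsucc : ∀ t, chain (t + 1) = next (chain t) := fun t =>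
    Function.iterate_succ_apply' next t _
  have hF : ∀ t, (chain (t + 1)).1.1 = insert (k t) (chain t).1.1 := by
    intro t; rw [hchainsucc]
  have hN : ∀ t, (chain (t + 1)).1.2 = k t + 1 := by
    intro t; rw [hchainsucc]
  have hk : StrictMono k := by
    apply strictMono_nat_of_lt_succ
    intro t
    have h1 : (chain (t + 1)).1.2 ≤ k (t + 1) := hstep1 _
    rw [hN t] at h1
    omega
  have hmono : ∀ s t, s ≤ t → (chain s).1.1 ⊆ (chain t).1.1 := by
    intro s t hst
    induction t, hst using Nat.le_induction with
    | base => exact subset_rfl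
    | succ t hst ih => rw [hF t]; exact ih.trans (Finset.subset_insert _ _)
  have hmem : ∀ t T, t < T → k t ∈ (chain T).1.1 := by
    intro t T hT
    exact hmono (t + 1) T hT ((hF t) ▸ Finset.mem_insert_self _ _)
  apply H k hk
  rw [li_sum_iff]
  intro A' B' hsum
  set T := (A'.sup id ⊔ B'.sup id) + 1 with hT
  have hsubA : A'.image k ⊆ (chain T).1.1 := by
    intro j hj
    obtain ⟨t, ht, rfl⟩ := Finset.mem_image.mp hj
    exact hmem t T (by have := Finset.le_sup (f := id) ht; simp only [id] at this; omega)
  have hsubB : B'.image k ⊆ (chain T).1.1 := by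
    intro j hj
    obtain ⟨t, ht, rfl⟩ := Finset.mem_image.mp hj
    exact hmem t T (by have := Finset.le_sup (f := id) ht; simp only [id] at this; omega)
  have hinj : ∀ a ∈ A', ∀ b ∈ A', k a = k b → a = b := fun a _ b _ h => hk.injective h
  have hinj' : ∀ a ∈ B', ∀ b ∈ B', k a = k b → a = b := fun a _ b _ h => hk.injective h
  have := (chain T).2 (A'.image k) (B'.image k) hsubA hsubB
    (by rw [Finset.sum_image hinj, Finset.sum_image hinj']; exact hsum)
  exact ⟨Finset.image_eq_empty.mp this.1, Finset.image_eq_empty.mp this.2⟩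

private lemma char2_combine (a b a' b' u w : M)
    (h1 : (a + u) + (b + w) = 0) (h2 : (a' + u) + (b' + w) = 0) :
    a + b + a' + b' = 0 := by
  have h4 : ((a + u) + (b + w)) + ((a' + u) + (b' + w))
      = (a + b + a' + b') + ((u + u) + (w + w)) := by abel
  have h5 : (a + b + a' + b') + ((u + u) + (w + w)) = 0 := by
    rw [← h4, h1, h2, add_zero]
  rw [char2_add_self u, char2_add_self w] at h5
  simpa using h5

private lemma sum_split (h : ℕ → M) (A : Finset ℕ) (m : ℕ) :
    ∑ j ∈ A, h j = (if m ∈ A then h m else 0) + ∑ j ∈ A \ {m}, h j := by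
  by_cases hm : m ∈ A
  · rw [if_pos hm, ← Finset.erase_eq, Finset.add_sum_erase _ _ hm]
  · rw [if_neg hm, ← Finset.erase_eq, Finset.erase_eq_of_notMem hm, zero_add]

end Aux

/-- passing to a subsequence and a cell of a finite partition preserving
linear independence of the restricted families. -/
theorem stmt3 {X : Type*} [Infinite X] (n : ℕ) (Xp : Fin (n + 1) → Set X)
    (hdisj : Pairwise (Function.onFun Disjoint Xp)) (hcover : (⋃ i, Xp i) = Set.univ)
    (x y : ℕ → (X →₀ ZMod 2))
    (hxy : LinearIndependent (ZMod 2) (Sum.elim x y))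
    (hx : ∀ p : Fin (n + 1), LinearIndependent (ZMod 2) (fun k => restrictSet (Xp p) (x k)))
    (hy : ∀ p : Fin (n + 1), LinearIndependent (ZMod 2) (fun k => restrictSet (Xp p) (y k))) :
    ∃ k : ℕ → ℕ, StrictMono k ∧ ∃ n₀ : Fin (n + 1),
      LinearIndependent (ZMod 2)
        (Sum.elim (fun m => restrictSet (Xp n₀) (x (k m)))
          (fun m => restrictSet (Xp n₀) (y (k m)))) := by
  
  classical
  by_contra H
  push_neg at H
  have stuck : ∀ p : Fin (n + 1), ∃ F : Finset ℕ, ∃ N : ℕ,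
      GoodAux (fun j => restrictSet (Xp p) (x j)) (fun j => restrictSet (Xp p) (y j)) F ∧
      ∀ m, N ≤ m → ¬ GoodAux (fun j => restrictSet (Xp p) (x j))
        (fun j => restrictSet (Xp p) (y j)) (insert m F) := by
    intro p
    exact greedy _ _ (fun k hk => H k hk p)
  choose F N hGood hstuck using stuck
  have hdata : ∀ (p : Fin (n + 1)) (m : ℕ), ∃ A B : Finset ℕ,
      N p ≤ m → (A ⊆ insert m (F p) ∧ B ⊆ insert m (F p) ∧
        (∑ j ∈ A, restrictSet (Xp p) (x j)) + (∑ j ∈ B, restrictSet (Xp p) (y j)) = 0 ∧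
        (m ∈ A ∨ m ∈ B)) := by
    intro p m
    by_cases hm : N p ≤ m
    · have hng := hstuck p m hm
      simp only [GoodAux] at hng
      push_neg at hng
      obtain ⟨A, B, hA, hB, hsum, hne⟩ := hng
      refine ⟨A, B, fun _ => ⟨hA, hB, hsum, ?_⟩⟩
      by_contra hno
      push_neg at hno
      have hg := (hGood p) A B ((Finset.subset_insert_iff_of_notMem hno.1).mp hA)
        ((Finset.subset_insert_iff_of_notMem hno.2).mp hB) hsum
      exact (Finset.nonempty_iff_ne_empty.mp (hne hg.1)) hg.2
    · exact ⟨∅, ∅, fun h => absurd h hm⟩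
  choose A B hAB using hdata
  set N' : ℕ := Finset.univ.sup N with hN'
  have hNle : ∀ p m, N' ≤ m → N p ≤ m :=
    fun p m h => le_trans (Finset.le_sup (Finset.mem_univ p)) h
  set d : ℕ → Fin (n + 1) → (Finset ℕ × Finset ℕ) × (Bool × Bool) := fun m p =>
    ((A p m \ {m}, B p m \ {m}), (decide (m ∈ A p m), decide (m ∈ B p m))) with hd
  have hmaps : Set.MapsTo d (Set.Ici N')
      (Set.univ.pi fun p => {q : (Finset ℕ × Finset ℕ) × (Bool × Bool) |
        q.1.1 ⊆ F p ∧ q.1.2 ⊆ F p}) := by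
    intro m hm
    rw [Set.mem_univ_pi]
    intro p
    have h := hAB p m (hNle p m hm)
    have hsub : ∀ (C : Finset ℕ), C ⊆ insert m (F p) → C \ {m} ⊆ F p := by
      intro C hC j hj
      have hj' := Finset.mem_sdiff.mp hj
      rcases Finset.mem_insert.mp (hC hj'.1) with h' | h'
      · exact absurd (Finset.mem_singleton.mpr h') hj'.2
      · exact h'
    exact ⟨hsub _ h.1, hsub _ h.2.1⟩
  have hfin : (Set.univ.pi fun p : Fin (n + 1) =>
      {q : (Finset ℕ × Finset ℕ) × (Bool × Bool) | q.1.1 ⊆ F p ∧ q.1.2 ⊆ F p}).Finite := by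
    apply Set.Finite.pi
    intro p
    apply Set.Finite.subset (Set.Finite.prod
      (Set.Finite.prod ((F p).powerset).finite_toSet ((F p).powerset).finite_toSet)
      (Set.finite_univ (α := Bool × Bool)))
    intro q hq
    exact ⟨⟨Finset.mem_coe.mpr (Finset.mem_powerset.mpr hq.1),
      Finset.mem_coe.mpr (Finset.mem_powerset.mpr hq.2)⟩, trivial⟩
  obtain ⟨m, hm, m', hm', hmne, heq⟩ :=
    (Set.Ici_infinite N').exists_ne_map_eq_of_mapsTo hmaps hfin
  have claim : ∀ p, restrictSet (Xp p) (x m) + restrictSet (Xp p) (y m)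
      + restrictSet (Xp p) (x m') + restrictSet (Xp p) (y m') = 0 := by
    intro p
    obtain ⟨hA1, hB1, hS1, hT1⟩ := hAB p m (hNle p m hm)
    obtain ⟨hA2, hB2, hS2, hT2⟩ := hAB p m' (hNle p m' hm')
    have e := congrFun heq p
    rw [hd] at e
    simp only [Prod.mk.injEq] at e
    obtain ⟨⟨e1, e2⟩, e3', e4'⟩ := e
    have e3 : m ∈ A p m ↔ m' ∈ A p m' := decide_eq_decide.mp e3'
    have e4 : m ∈ B p m ↔ m' ∈ B p m' := decide_eq_decide.mp e4'
    rw [sum_split (fun j => restrictSet (Xp p) (x j)) (A p m) m,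
      sum_split (fun j => restrictSet (Xp p) (y j)) (B p m) m] at hS1
    rw [sum_split (fun j => restrictSet (Xp p) (x j)) (A p m') m',
      sum_split (fun j => restrictSet (Xp p) (y j)) (B p m') m', ← e1, ← e2] at hS2
    have key := char2_combine _ _ _ _ _ _ hS1 hS2
    by_cases hA' : m ∈ A p m
    · by_cases hB' : m ∈ B p m
      · rw [if_pos hA', if_pos hB', if_pos (e3.mp hA'), if_pos (e4.mp hB')] at key
        exact key
      · rw [if_pos hA', if_neg hB', if_pos (e3.mp hA'),
          if_neg (fun h => hB' (e4.mpr h)), add_zero, add_zero] at key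
        exfalso
        have hpair := (li_iff (fun k => restrictSet (Xp p) (x k))).mp (hx p) {m, m'}
          (by rw [Finset.sum_pair hmne]; exact key)
        exact Finset.insert_ne_empty _ _ hpair
    · have hB' : m ∈ B p m := hT1.resolve_left hA'
      rw [if_neg hA', if_pos hB', if_neg (fun h => hA' (e3.mpr h)),
        if_pos (e4.mp hB'), zero_add, add_zero] at key
      exfalso
      have hpair := (li_iff (fun k => restrictSet (Xp p) (y k))).mp (hy p) {m, m'}
        (by rw [Finset.sum_pair hmne]; exact key)
      exact Finset.insert_ne_empty _ _ hpair
  have hz : x m + y m + x m' + y m' = 0 := by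
    have hpart := sum_restrict_eq Xp hdisj hcover (x m + y m + x m' + y m')
    rw [← hpart]
    apply Finset.sum_eq_zero
    intro p _
    rw [restrictSet_add, restrictSet_add, restrictSet_add]
    exact claim p
  have hfinal := (li_sum_iff x y).mp hxy {m, m'} {m, m'} ?_
  · exact Finset.insert_ne_empty _ _ hfinal.1
  · rw [Finset.sum_pair hmne, Finset.sum_pair hmne]
    calc x m + x m' + (y m + y m') = x m + y m + x m' + y m' := by abel
      _ = 0 := hz
end

section
/- Let X be an infinite set, K ≥ 1 an integer, and ((x_n^0, …, x_n^{K−1}))_{n∈ℕ} a sequence in ([X]^{<ω})^K. Then there exist elements d_0, …, d_{K−1} ∈ [X]^{<ω}, a strictly increasing sequence (n_l)_{l∈ℕ} of naturals, an integer t with 0 ≤ t ≤ K, a sequence ((y_l^0, …, y_l^{t−1}))_{l∈ℕ} in ([X]^{<ω})^t, and scalars P_s(i) ∈ 𝔽₂ (for 0 ≤ s < K and 0 ≤ i < t) such that: (i) x_{n_l}^s = (Σ_{i<t} P_s(i)·y_l^i) △ d_s for every l ∈ ℕ and every 0 ≤ s < K (when t = 0 the sum is empty, so x_{n_l}^s =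 d_s); and (ii) the family (y_l^i)_{l∈ℕ, 0≤i<t} is linearly independent. -/
open Filter Topology

set_option linter.unusedSectionVars false
set_option linter.unusedVariables false
set_option maxHeartbeats 1000000

section Aux4

variable {V : Type*} [AddCommGroup V] [Module (ZMod 2) V]
variable {G : Type*} [Fintype G] [AddCommGroup G] [Module (ZMod 2) G]

/-- One step of refinement: for a single sequence `w`, find an infinite subset on which
`w` is either constant or has all fibers finite. -/
lemma good_refine (w : ℕ → V) (N : Set ℕ) (hN : N.Infinite) :
    ∃ N' : Set ℕ, N' ⊆ N ∧ N'.Infinite ∧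
      ((∃ v, ∀ n ∈ N', w n = v) ∨ (∀ v, {n | n ∈ N' ∧ w n = v}.Finite)) := by
  by_cases h : ∃ v, {n | n ∈ N ∧ w n = v}.Infinite
  · obtain ⟨v, hv⟩ := h
    refine ⟨{n | n ∈ N ∧ w n = v}, fun n hn => hn.1, hv, Or.inl ⟨v, fun n hn => hn.2⟩⟩
  · push_neg at h
    exact ⟨N, le_refl _, hN, Or.inr h⟩


lemma good_all (z : ℕ → G → V) :
    ∃ N : Set ℕ, N.Infinite ∧ ∀ ε : G,
      ((∃ v, ∀ n ∈ N, z n ε = v) ∨ (∀ v, {n | n ∈ N ∧ z n ε = v}.Finite)) := by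
  classical
  suffices h : ∀ s : Finset G, ∃ N : Set ℕ, N.Infinite ∧ ∀ ε ∈ s,
      ((∃ v, ∀ n ∈ N, z n ε = v) ∨ (∀ v, {n | n ∈ N ∧ z n ε = v}.Finite)) by
    obtain ⟨N, hN, h⟩ := h Finset.univ
    exact ⟨N, hN, fun ε => h ε (Finset.mem_univ ε)⟩
  intro s
  induction s using Finset.induction_on with
  | empty => exact ⟨Set.univ, Set.infinite_univ, by simp⟩
  | @insert ε s hε ih =>
    obtain ⟨N, hN, hgood⟩ := ih
    obtain ⟨N', hsub, hN', hg'⟩ := good_refine (fun n => z n ε) N hN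
    refine ⟨N', hN', ?_⟩
    intro ε' hε'
    rcases Finset.mem_insert.mp hε' with rfl | hmem
    · exact hg'
    · rcases hgood ε' hmem with ⟨v, hv⟩ | hfin
      · exact Or.inl ⟨v, fun n hn => hv n (hsub hn)⟩
      · exact Or.inr fun v => (hfin v).subset fun n hn => ⟨hsub hn.1, hn.2⟩


lemma span_finite (A : Set V) (hA : A.Finite) :
    (Submodule.span (ZMod 2) A : Set V).Finite := by
  have := Module.Finite.span_of_finite (ZMod 2) hA
  have : Finite (Submodule.span (ZMod 2) A) := Module.finite_of_finite (ZMod 2)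
  exact (Submodule.span (ZMod 2) A : Set V).toFinite


lemma exists_good_seq (z : ℕ → G → V) (N : Set ℕ) (hN : N.Infinite) (E : Set G)
    (hfib : ∀ ε ∉ E, ∀ v, {n | n ∈ N ∧ z n ε = v}.Finite) :
    ∃ nseq : ℕ → ℕ, StrictMono nseq ∧ (∀ l, nseq l ∈ N) ∧
      ∀ l, ∀ ε ∉ E, z (nseq l) ε ∉
        Submodule.span (ZMod 2) {w | ∃ j < l, ∃ a : G, w = z (nseq j) a} := by
  classical
  have pick : ∀ (m : ℕ) (A : Finset V), ∃ n, n ∈ N ∧ m < n ∧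
      ∀ ε ∉ E, z n ε ∉ Submodule.span (ZMod 2) (A : Set V) := by
    intro m A
    have hspanfin : (Submodule.span (ZMod 2) (A : Set V) : Set V).Finite :=
      span_finite _ A.finite_toSet
    have hbad : {n | n ∈ N ∧ ∃ ε ∉ E,
        z n ε ∈ Submodule.span (ZMod 2) (A : Set V)}.Finite := by
      have hsub : {n | n ∈ N ∧ ∃ ε ∉ E, z n ε ∈ Submodule.span (ZMod 2) (A : Set V)} ⊆
          ⋃ ε ∈ {ε : G | ε ∉ E}, ⋃ v ∈ (Submodule.span (ZMod 2) (A : Set V) : Set V),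
            {n | n ∈ N ∧ z n ε = v} := by
        rintro n ⟨hnN, ε, hε, hmem⟩
        exact Set.mem_biUnion hε (Set.mem_biUnion hmem ⟨hnN, rfl⟩)
      refine Set.Finite.subset ?_ hsub
      exact Set.Finite.biUnion (Set.toFinite _) fun ε hε =>
        Set.Finite.biUnion hspanfin fun v _ => hfib ε hε v
    have hinf : (N \ ({n | n ∈ N ∧ ∃ ε ∉ E,
        z n ε ∈ Submodule.span (ZMod 2) (A : Set V)} ∪ Set.Iic m)).Infinite :=
      hN.diff (hbad.union (Set.finite_Iic m))
    obtain ⟨n, hn⟩ := hinf.nonempty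
    rw [Set.mem_diff, Set.mem_union] at hn
    push_neg at hn
    obtain ⟨hnN, hnbad, hnle⟩ := hn
    refine ⟨n, hnN, not_le.mp (fun h => hnle (Set.mem_Iic.mpr h)), ?_⟩
    intro ε hε hmem
    exact hnbad ⟨hnN, ε, hε, hmem⟩
  choose f hfN hfgt hfavoid using pick
  let step : ℕ × Finset V → ℕ × Finset V := fun p =>
    let A' := p.2 ∪ Finset.image (fun a => z p.1 a) Finset.univ
    (f p.1 A', A')
  let F : ℕ → ℕ × Finset V := fun l => Nat.rec (f 0 ∅, ∅) (fun _ p => step p) l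
  have hF : ∀ l, F (l + 1) = step (F l) := fun l => rfl
  set nseq : ℕ → ℕ := fun l => (F l).1 with hnseq
  set A : ℕ → Finset V := fun l => (F l).2 with hA
  have hA0 : A 0 = ∅ := rfl
  have hAsucc : ∀ l, A (l + 1) = A l ∪ Finset.image (fun a => z (nseq l) a) Finset.univ :=
    fun l => rfl
  have hns0 : nseq 0 = f 0 ∅ := rfl
  have hnssucc : ∀ l, nseq (l + 1) = f (nseq l) (A (l + 1)) := fun l => rfl
  have hmemN : ∀ l, nseq l ∈ N := by
    intro l
    cases l with
    | zero => exact hfN 0 ∅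
    | succ l => rw [hnssucc l]; exact hfN _ _
  have hmono : StrictMono nseq := by
    apply strictMono_nat_of_lt_succ
    intro l
    rw [hnssucc l]
    exact hfgt _ _
  have hzmem : ∀ l j, j < l → ∀ a : G, z (nseq j) a ∈ A l := by
    intro l
    induction l with
    | zero => intro j hj; omega
    | succ l ih =>
      intro j hj a
      rw [hAsucc l]
      rcases Nat.lt_succ_iff_lt_or_eq.mp hj with h | rfl
      · exact Finset.mem_union_left _ (ih j h a)
      · exact Finset.mem_union_right _ (Finset.mem_image_of_mem _ (Finset.mem_univ a))
  have havoidA : ∀ l, ∀ ε ∉ E, z (nseq l) ε ∉ Submodule.span (ZMod 2) ((A l : Set V)) := by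
    intro l
    cases l with
    | zero => rw [hns0, hA0]; exact hfavoid 0 ∅
    | succ l => rw [hnssucc l]; exact hfavoid _ _
  refine ⟨nseq, hmono, hmemN, ?_⟩
  intro l ε hε hmem
  apply havoidA l ε hε
  apply Submodule.span_mono (s := {w | ∃ j < l, ∃ a : G, w = z (nseq j) a}) ?_ hmem
  rintro w ⟨j, hj, a, rfl⟩
  exact hzmem l j hj a


end Aux4

/-- a normal form for sequences in `([X]^{<ω})^K`. -/
theorem stmt4 {X : Type*} [Infinite X] (K : ℕ) (hK : 1 ≤ K)
    (x : ℕ → Fin K → (X →₀ ZMod 2)) :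
    ∃ (d : Fin K → (X →₀ ZMod 2)) (nseq : ℕ → ℕ) (_ : StrictMono nseq)
      (t : ℕ) (_ : t ≤ K) (y : ℕ → Fin t → (X →₀ ZMod 2)) (P : Fin K → Fin t → ZMod 2),
      (∀ (l : ℕ) (s : Fin K), x (nseq l) s = (∑ i : Fin t, P s i • y l i) + d s) ∧
      LinearIndependent (ZMod 2) (fun li : ℕ × Fin t => y li.1 li.2) := by
  classical
  let zl : ℕ → (Fin K → ZMod 2) →ₗ[ZMod 2] (X →₀ ZMod 2) := fun n =>
    { toFun := fun ε => ∑ s, ε s • x n s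
      map_add' := by
        intro a b
        simp [add_smul, Finset.sum_add_distrib]
      map_smul' := by
        intro c a
        simp [mul_smul, Finset.smul_sum] }
  let z : ℕ → (Fin K → ZMod 2) → (X →₀ ZMod 2) := fun n ε => zl n ε
  have hz_single : ∀ n (s : Fin K), z n (Pi.single s 1) = x n s := by
    intro n s
    show ∑ s' : Fin K, (Pi.single s (1 : ZMod 2) : Fin K → ZMod 2) s' • x n s' = x n s
    rw [Finset.sum_eq_single s]
    · simp
    · intro s' _ hne
      rw [Pi.single_eq_of_ne hne, zero_smul]
    · intro h
      exact absurd (Finset.mem_univ s) h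
  obtain ⟨N, hN, hdich⟩ := good_all z
  have zmod2cases : ∀ c : ZMod 2, c = 0 ∨ c = 1 := by decide
  let E : Submodule (ZMod 2) (Fin K → ZMod 2) :=
    { carrier := {ε | ∃ v, ∀ n ∈ N, z n ε = v}
      add_mem' := by
        rintro a b ⟨va, hva⟩ ⟨vb, hvb⟩
        exact ⟨va + vb, fun n hn => by
          show z n (a + b) = va + vb
          rw [show z n (a + b) = z n a + z n b from map_add (zl n) a b,
            hva n hn, hvb n hn]⟩
      zero_mem' := ⟨0, fun n hn => map_zero (zl n)⟩
      smul_mem' := by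
        intro c a ha
        obtain ⟨v, hv⟩ := ha
        rcases zmod2cases c with rfl | rfl
        · exact ⟨0, fun n hn => by
            show z n (0 • a) = 0
            rw [zero_smul]; exact map_zero (zl n)⟩
        · exact ⟨v, fun n hn => by
            show z n (1 • a) = v
            rw [one_smul]; exact hv n hn⟩ }
  have hEmem : ∀ ε, ε ∈ E ↔ ∃ v, ∀ n ∈ N, z n ε = v := fun ε => Iff.rfl
  have hfib : ∀ ε ∉ (E : Set (Fin K → ZMod 2)), ∀ v, {n | n ∈ N ∧ z n ε = v}.Finite := by
    intro ε hε v
    rcases hdich ε with hconst | hfin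
    · exact absurd ((hEmem ε).mpr hconst) hε
    · exact hfin v
  obtain ⟨nseq, hmono, hmemN, havoid⟩ := exists_good_seq z N hN E hfib
  -- quotient
  let t : ℕ := Module.finrank (ZMod 2) ((Fin K → ZMod 2) ⧸ E)
  have ht : t ≤ K := by
    have h1 := Submodule.finrank_quotient_add_finrank E
    have h2 : Module.finrank (ZMod 2) (Fin K → ZMod 2) = K := by
      simp [Module.finrank_pi]
    omega
  let b : Module.Basis (Fin t) (ZMod 2) ((Fin K → ZMod 2) ⧸ E) :=
    Module.finBasis (ZMod 2) _
  have hsurj := Submodule.Quotient.mk_surjective E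
  let εv : Fin t → (Fin K → ZMod 2) := fun i => (hsurj (b i)).choose
  have hεv : ∀ i, (Submodule.Quotient.mk (εv i) : (Fin K → ZMod 2) ⧸ E) = b i :=
    fun i => (hsurj (b i)).choose_spec
  let P : Fin K → Fin t → ZMod 2 := fun s i =>
    b.repr (Submodule.Quotient.mk (Pi.single s 1)) i
  let η : Fin K → (Fin K → ZMod 2) := fun s => Pi.single s 1 - ∑ i, P s i • εv i
  have hmkmul : ∀ (c : ZMod 2) (a : Fin K → ZMod 2) (i : Fin t),
      E.mkQ (c • εv i) = c • b i := by
    intro c a i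
    rw [map_smul, Submodule.mkQ_apply, hεv i]
  have hη : ∀ s, η s ∈ E := by
    intro s
    rw [← Submodule.Quotient.mk_eq_zero]
    have key : (Submodule.Quotient.mk (η s) : (Fin K → ZMod 2) ⧸ E) =
        Submodule.Quotient.mk (Pi.single s 1) - ∑ i, P s i • b i := by
      rw [← Submodule.mkQ_apply]
      calc E.mkQ (η s)
          = E.mkQ (Pi.single s 1) - ∑ i, E.mkQ (P s i • εv i) := by
            rw [show η s = Pi.single s 1 - ∑ i, P s i • εv i from rfl, map_sub, map_sum]
        _ = Submodule.Quotient.mk (Pi.single s 1) - ∑ i, P s i • b i := by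
            rw [Submodule.mkQ_apply]
            congr 1
            exact Finset.sum_congr rfl fun i _ => by
              rw [map_smul, Submodule.mkQ_apply, hεv i]
    rw [key, Module.Basis.sum_repr b (Submodule.Quotient.mk (Pi.single s 1)), sub_self]
  have hd : ∀ s, ∃ v, ∀ n ∈ N, z n (η s) = v := fun s => (hEmem _).mp (hη s)
  let d : Fin K → (X →₀ ZMod 2) := fun s => (hd s).choose
  have hdspec : ∀ s, ∀ n ∈ N, z n (η s) = d s := fun s => (hd s).choose_spec
  let y : ℕ → Fin t → (X →₀ ZMod 2) := fun l i => z (nseq l) (εv i)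
  refine ⟨d, nseq, hmono, t, ht, y, P, ?_, ?_⟩
  · intro l s
    have h1 : Pi.single s (1 : ZMod 2) = η s + ∑ i, P s i • εv i := by
      rw [show η s = Pi.single s 1 - ∑ i, P s i • εv i from rfl, sub_add_cancel]
    calc x (nseq l) s = z (nseq l) (Pi.single s 1) := (hz_single _ s).symm
      _ = z (nseq l) (η s) + ∑ i, P s i • z (nseq l) (εv i) := by
          rw [h1]
          show zl (nseq l) _ = _
          rw [map_add, map_sum]
          congr 1
          exact Finset.sum_congr rfl fun i _ => map_smul (zl (nseq l)) _ _
      _ = (∑ i, P s i • y l i) + d s := by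
          rw [hdspec s (nseq l) (hmemN l)]
          exact add_comm _ _
  · rw [linearIndependent_iff']
    intro sfin g hsum p hp
    by_contra hgp
    set T : Finset (ℕ × Fin t) := sfin.filter (fun q => g q ≠ 0) with hT
    have hTne : T.Nonempty := ⟨p, Finset.mem_filter.mpr ⟨hp, hgp⟩⟩
    have hTifst : (T.image Prod.fst).Nonempty := hTne.image _
    set L : ℕ := (T.image Prod.fst).max' hTifst with hL
    have hLmem : ∃ q ∈ T, q.1 = L := by
      have := (T.image Prod.fst).max'_mem hTifst
      rw [Finset.mem_image] at this
      obtain ⟨q, hq, hq1⟩ := this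
      exact ⟨q, hq, hq1⟩
    have hLmax : ∀ q ∈ T, q.1 ≤ L := fun q hq =>
      Finset.le_max' _ _ (Finset.mem_image_of_mem _ hq)
    -- the coefficient vector at level L
    let G' : ℕ → Fin t → ZMod 2 := fun l i => if (l, i) ∈ sfin then g (l, i) else 0
    let aL : Fin K → ZMod 2 := ∑ i, G' L i • εv i
    have haLnE : aL ∉ E := by
      intro hmem
      have hq0 : (Submodule.Quotient.mk aL : (Fin K → ZMod 2) ⧸ E) = 0 :=
        (Submodule.Quotient.mk_eq_zero E).mpr hmem
      have hzero : (∑ i, G' L i • b i) = 0 := by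
        rw [← hq0, ← Submodule.mkQ_apply,
          show aL = ∑ i, G' L i • εv i from rfl, map_sum]
        exact (Finset.sum_congr rfl fun i _ => by
          rw [map_smul, Submodule.mkQ_apply, hεv i]).symm
      have hall := linearIndependent_iff'.mp b.linearIndependent Finset.univ (G' L) hzero
      obtain ⟨q, hqT, hq1⟩ := hLmem
      have hqs : q ∈ sfin := (Finset.mem_filter.mp hqT).1
      have hqg : g q ≠ 0 := (Finset.mem_filter.mp hqT).2
      obtain ⟨q1, q2⟩ := q
      have hq1' : q1 = L := hq1
      subst hq1'
      have hg0 : G' L q2 = 0 := hall q2 (Finset.mem_univ _)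
      have hGg : G' L q2 = g (L, q2) := if_pos hqs
      exact hqg (hGg.symm.trans hg0)
    have hS1 : z (nseq L) aL = ∑ q ∈ sfin.filter (fun q => q.1 = L), g q • y q.1 q.2 := by
      have e1 : z (nseq L) aL = ∑ i, G' L i • y L i := by
        show zl (nseq L) (∑ i, G' L i • εv i) = _
        rw [map_sum]
        exact Finset.sum_congr rfl fun i _ => map_smul (zl (nseq L)) _ _
      have e2 : (∑ i, G' L i • y L i)
          = ∑ i ∈ Finset.univ.filter (fun i => (L, i) ∈ sfin), g (L, i) • y L i := by
        rw [Finset.sum_filter]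
        refine Finset.sum_congr rfl fun i _ => ?_
        show (if (L, i) ∈ sfin then g (L, i) else 0) • y L i = _
        by_cases h : (L, i) ∈ sfin
        · rw [if_pos h, if_pos h]
        · rw [if_neg h, if_neg h, zero_smul]
      rw [e1, e2]
      refine Finset.sum_bij' (fun i _ => (L, i)) (fun q _ => q.2) ?_ ?_ ?_ ?_ ?_
      · intro i hi
        rw [Finset.mem_filter]
        exact ⟨(Finset.mem_filter.mp hi).2, rfl⟩
      · intro q hq
        have hq' := Finset.mem_filter.mp hq
        rw [Finset.mem_filter]
        refine ⟨Finset.mem_univ _, ?_⟩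
        obtain ⟨q1, q2⟩ := q
        have : q1 = L := hq'.2
        subst this
        exact hq'.1
      · intro i hi
        rfl
      · intro q hq
        have hq' := Finset.mem_filter.mp hq
        obtain ⟨q1, q2⟩ := q
        have : q1 = L := hq'.2
        subst this
        rfl
      · intro i hi
        rfl
    have hsplit := Finset.sum_filter_add_sum_filter_not sfin (fun q => q.1 = L)
      (fun q => g q • y q.1 q.2)
    rw [hsum] at hsplit
    have hS1eq : z (nseq L) aL
        = -(∑ q ∈ sfin.filter (fun q => ¬ q.1 = L), g q • y q.1 q.2) := by
      rw [hS1]; exact eq_neg_of_add_eq_zero_left hsplit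
    have hS2mem : (∑ q ∈ sfin.filter (fun q => ¬ q.1 = L), g q • y q.1 q.2) ∈
        Submodule.span (ZMod 2) {w | ∃ j < L, ∃ a : Fin K → ZMod 2, w = z (nseq j) a} := by
      apply Submodule.sum_mem
      intro q hq
      rw [Finset.mem_filter] at hq
      by_cases hgq : g q = 0
      · rw [hgq, zero_smul]; exact Submodule.zero_mem _
      · have hqT : q ∈ T := Finset.mem_filter.mpr ⟨hq.1, hgq⟩
        have hlt : q.1 < L := lt_of_le_of_ne (hLmax q hqT) hq.2
        apply Submodule.subset_span
        refine ⟨q.1, hlt, g q • εv q.2, ?_⟩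
        exact (map_smul (zl (nseq q.1)) _ _).symm
    exact havoid L aL haLnE (by rw [hS1eq]; exact Submodule.neg_mem _ hS2mem)
end

section
/- Let G be a non-discrete Hausdorff topological Boolean group, i.e., a Hausdorff topological abelian group in which x + x = 0 for every x (so G is a topological vector space over the two-element field 𝔽₂), whose topology is not discrete. Then there exist nonempty open sets U_k^j ⊆ G (for k, j ∈ ℕ) such that whenever u_k^j ∈ U_k^j for each k, j ∈ ℕ, the family (u_k^j)_{k,j∈ℕ} is linearly independent over 𝔽₂. -/
open Filter Topology

/-! Build nonempty open sets `U₀, U₁, …` together with shrinking neighbourhoods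
`N₀ ⊇ N₁ ⊇ ⋯` of `0` such that every nonempty subsum `∑ i ∈ T, uᵢ` with `uᵢ ∈ Uᵢ` and
`T ⊆ {0, …, n - 1}` avoids `Nₙ`. At stage `n`, non-discreteness gives a point `y ≠ 0` deep
inside `Nₙ`, and `Uₙ` is a small neighbourhood of `-y`: adding an element of `Uₙ` to a sum
outside `Nₙ` cannot land near `0`. All nonempty subsums of a selection are then nonzero,
which over `𝔽₂` is linear independence, and `ℕ × ℕ ≃ ℕ` provides the double indexing. -/

open Finset

section TopologicalAddGroup

variable {G : Type*} [AddCommGroup G] [TopologicalSpace G] [IsTopologicalAddGroup G]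

theorem exists_mem_ne_zero_of_mem_nhds (hnd : ¬ DiscreteTopology G) {N : Set G}
    (hN : N ∈ 𝓝 (0 : G)) : ∃ y ∈ N, y ≠ 0 := by
  by_contra! h
  have hzero : {(0 : G)} ∈ 𝓝 (0 : G) := mem_of_superset hN h
  exact hnd <| discreteTopology_iff_isOpen_singleton_zero.2 <|
    (isOpen_singleton_iff_nhds_eq_pure 0).2 (le_antisymm (le_pure_iff.2 hzero) (pure_le_nhds 0))

/- `U = O - y` for a point `y ≠ 0` inside `N` and a small open `O ∋ 0`: if `s + u ∈ O` with
`u + y ∈ O`, then `s ∈ O - O + y ⊆ N`; and `U` misses `O` because `y ∉ O - O`. -/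
theorem exists_isOpen_add_notMem [T1Space G] (hnd : ¬ DiscreteTopology G) {N : Set G}
    (hN : N ∈ 𝓝 (0 : G)) :
    ∃ U O : Set G, IsOpen U ∧ U.Nonempty ∧ O ∈ 𝓝 (0 : G) ∧ O ⊆ N ∧ Disjoint U O ∧
      ∀ s ∉ N, ∀ u ∈ U, s + u ∉ O := by
  obtain ⟨y, hyN, hy0⟩ := exists_mem_ne_zero_of_mem_nhds hnd (interior_mem_nhds.2 hN)
  have hM : {z : G | z + y ∈ N ∧ z ≠ y} ∈ 𝓝 (0 : G) := by
    refine inter_mem ?_ (compl_singleton_mem_nhds hy0.symm)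
    exact (continuous_add_const y).continuousAt.preimage_mem_nhds
      (by simpa using mem_interior_iff_mem_nhds.1 hyN)
  obtain ⟨V, hV, hVM⟩ := exists_nhds_half_neg hM
  set O := interior (V ∩ N)
  have hO : O ∈ 𝓝 (0 : G) := interior_mem_nhds.2 (inter_mem hV hN)
  have hOV : O ⊆ V := interior_subset.trans Set.inter_subset_left
  refine ⟨(· + y) ⁻¹' O, O, isOpen_interior.preimage (continuous_add_const y),
    ⟨-y, by simpa using mem_of_mem_nhds hO⟩, hO, interior_subset.trans Set.inter_subset_right,
    Set.disjoint_left.2 fun u hu huO => (hVM _ (hOV hu) _ (hOV huO)).2 (add_sub_cancel_left u y),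
    fun s hs u hu hsu => hs ?_⟩
  have hsN := (hVM _ (hOV hsu) _ (hOV hu)).1
  rwa [show s + u - (u + y) + y = s by abel] at hsN

end TopologicalAddGroup

theorem finset_sum_notMem_of_subset_range {M : Type*} [AddCommMonoid M] {U N : ℕ → Set M}
    {u : ℕ → M} (hu : ∀ n, u n ∈ U n) (hanti : ∀ n, N (n + 1) ⊆ N n)
    (hdisj : ∀ n, Disjoint (U n) (N (n + 1)))
    (hadd : ∀ n, ∀ s ∉ N n, ∀ v ∈ U n, s + v ∉ N (n + 1)) :
    ∀ n, ∀ T ⊆ range n, T.Nonempty → ∑ i ∈ T, u i ∉ N n := by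
  intro n
  induction n with
  | zero => intro T hT hne; simp_all
  | succ n ih =>
    intro T hT hne
    have hsub : T.erase n ⊆ range n := subset_insert_iff.1 (range_add_one ▸ hT)
    by_cases hn : n ∈ T
    · rw [← insert_erase hn, sum_insert (notMem_erase n T), add_comm (u n)]
      rcases (T.erase n).eq_empty_or_nonempty with hempty | hrest
      · rw [hempty, sum_empty, zero_add]
        exact Set.disjoint_left.1 (hdisj n) (hu n)
      · exact hadd n _ (ih _ hsub hrest) _ (hu n)
    · rw [erase_eq_of_notMem hn] at hsub
      exact fun h => ih T hsub hne (hanti n h)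

theorem exists_isOpen_seq_finset_sum_ne_zero {G : Type*} [AddCommGroup G] [TopologicalSpace G]
    [IsTopologicalAddGroup G] [T1Space G] (hnd : ¬ DiscreteTopology G) :
    ∃ U : ℕ → Set G, (∀ n, IsOpen (U n)) ∧ (∀ n, (U n).Nonempty) ∧
      ∀ u : ℕ → G, (∀ n, u n ∈ U n) → ∀ T : Finset ℕ, T.Nonempty → ∑ i ∈ T, u i ≠ 0 := by
  choose! V O hVo hVne hO hON hdisj hadd using
    fun N (hN : N ∈ 𝓝 (0 : G)) => exists_isOpen_add_notMem hnd hN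
  set N : ℕ → Set G := fun n => O^[n] Set.univ
  have hsucc : ∀ n, N (n + 1) = O (N n) := fun n => Function.iterate_succ_apply' _ _ _
  have hN : ∀ n, N n ∈ 𝓝 (0 : G) := by
    intro n
    induction n with
    | zero => exact univ_mem
    | succ n ih => exact hsucc n ▸ hO _ ih
  refine ⟨fun n => V (N n), fun n => hVo _ (hN n), fun n => hVne _ (hN n), ?_⟩
  intro u hu T hT hsum
  obtain ⟨n, hTn⟩ := T.exists_nat_subset_range
  refine finset_sum_notMem_of_subset_range (N := N) hu (fun n => hsucc n ▸ hON _ (hN n))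
    (fun n => hsucc n ▸ hdisj _ (hN n)) (fun n => hsucc n ▸ hadd _ (hN n)) n T hTn hT ?_
  exact hsum ▸ mem_of_mem_nhds (hN n)

theorem linearIndependent_zmod_two_of_finset_sum_ne_zero {ι M : Type*} [AddCommGroup M]
    [Module (ZMod 2) M] {v : ι → M} (hv : ∀ s : Finset ι, s.Nonempty → ∑ i ∈ s, v i ≠ 0) :
    LinearIndependent (ZMod 2) v := by
  classical
  rw [linearIndependent_iff']
  intro s g hg i hi
  by_contra hgi
  refine hv (s.filter (g · ≠ 0)) ⟨i, mem_filter.2 ⟨hi, hgi⟩⟩ ?_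
  rw [sum_filter]
  refine (sum_congr rfl fun j _ => ?_).trans hg
  have hg01 : ∀ a : ZMod 2, a = 0 ∨ a = 1 := by decide
  rcases hg01 (g j) with h | h <;> simp [h]

/-- in a non-discrete Hausdorff topological Boolean group there is a doubly
indexed family of nonempty open sets any selection from which is linearly independent
over `𝔽₂`. -/
theorem stmt8 {G : Type*} [AddCommGroup G] [Module (ZMod 2) G]
    [TopologicalSpace G] [IsTopologicalAddGroup G] [T2Space G]
    (hnd : ¬ DiscreteTopology G) :
    ∃ U : ℕ → ℕ → Set G,
      (∀ k j, IsOpen (U k j)) ∧ (∀ k j, (U k j).Nonempty) ∧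
      ∀ u : ℕ → ℕ → G, (∀ k j, u k j ∈ U k j) →
        LinearIndependent (ZMod 2) (fun kj : ℕ × ℕ => u kj.1 kj.2) := by
  obtain ⟨U, hUo, hUne, hU⟩ := exists_isOpen_seq_finset_sum_ne_zero hnd
  refine ⟨fun k j => U (Nat.pair k j), fun k j => hUo _, fun k j => hUne _, fun u hu => ?_⟩
  set v : ℕ → G := fun n => u n.unpair.1 n.unpair.2
  have hv : ∀ n, v n ∈ U n := fun n => by simpa [v] using hu n.unpair.1 n.unpair.2
  exact linearIndependent_equiv' Nat.pairEquiv (by ext ⟨k, j⟩; simp [v])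
    |>.2 (linearIndependent_zmod_two_of_finset_sum_ne_zero (hU v hv))
end

section
/- Let X be a Hausdorff topological space. The following statements are equivalent: (i) every power of X (with the product topology) is countably compact; (ii) X^{2^𝔠} is countably compact; (iii) X^{|X|^ω} is countably compact; (iv) there exists a free ultrafilter p on ℕ such that X is p-compact. -/
open Filter Topology

lemma free_infinite {p : Ultrafilter ℕ} (hp : FreeUltrafilter p) {s : Set ℕ} (hs : s ∈ p) :
    s.Infinite := by
  intro h
  obtain ⟨n, -, hn⟩ := Ultrafilter.eq_pure_of_finite_mem h hs
  exact hp n hn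

lemma free_of_le_cofinite {p : Ultrafilter ℕ} (h : (↑p : Filter ℕ) ≤ cofinite) :
    FreeUltrafilter p := by
  intro n hn
  have h1 : ({n} : Set ℕ)ᶜ ∈ p := h (by simp [mem_cofinite])
  have h2 : ({n} : Set ℕ) ∈ p := by rw [hn]; exact Ultrafilter.mem_pure.mpr rfl
  exact Ultrafilter.compl_mem_iff_notMem.mp h1 h2

/-- In a T1 countably compact space, every sequence has a limit along some free ultrafilter. -/
lemma exists_free_plimit {Z : Type*} [TopologicalSpace Z] [T1Space Z]
    (hZ : CountablyCompact Z) (y : ℕ → Z) :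
    ∃ (p : Ultrafilter ℕ) (l : Z), FreeUltrafilter p ∧ IsPLimit p y l := by
  have key : ∃ l : Z, ∀ U ∈ nhds l, {n | y n ∈ U}.Infinite := by
    by_cases hR : (Set.range y).Finite
    · haveI := hR.to_subtype
      obtain ⟨z, hz⟩ := Finite.exists_infinite_fiber
        (fun n => (⟨y n, Set.mem_range_self n⟩ : Set.range y))
      refine ⟨z.1, fun U hU => ?_⟩
      refine (Set.infinite_coe_iff.mp hz).mono fun n hn => ?_
      have : y n = z.1 := congrArg Subtype.val hn
      simpa [this] using mem_of_mem_nhds hU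
    · obtain ⟨l, hacc⟩ := hZ _ hR
      refine ⟨l, fun U hU => ?_⟩
      intro hfin
      have hcl : IsClosed (y '' {n | y n ∈ U} \ {l}) := (Set.Finite.diff (hfin.image y) : (y '' {n | y n ∈ U} \ {l}).Finite).isClosed
      have hV : (U ∩ (y '' {n | y n ∈ U} \ {l})ᶜ) ∈ nhds l := by
        refine Filter.inter_mem hU (hcl.isOpen_compl.mem_nhds ?_)
        simp
      obtain ⟨w, ⟨⟨hwU, hwc⟩, hwR⟩, hwl⟩ :=
        accPt_iff_nhds.mp hacc _ hV
      obtain ⟨m, rfl⟩ := hwR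
      exact hwc ⟨Set.mem_image_of_mem y hwU, hwl⟩
  obtain ⟨l, hl⟩ := key
  have hne : ((nhds l).comap y ⊓ cofinite).NeBot := by
    rw [← Filter.forall_mem_nonempty_iff_neBot]
    intro s hs
    rw [Filter.mem_inf_iff] at hs
    obtain ⟨t, ht, c, hc, rfl⟩ := hs
    obtain ⟨U, hU, hUt⟩ := ht
    have hcc : cᶜ.Finite := mem_cofinite.mp hc
    obtain ⟨n, hn1, hn2⟩ := ((hl U hU).diff hcc).nonempty
    exact ⟨n, hUt hn1, Set.not_notMem.mp hn2⟩
  obtain ⟨p, hp⟩ := Filter.exists_ultrafilter_le ((nhds l).comap y ⊓ cofinite)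
  refine ⟨p, l, free_of_le_cofinite (hp.trans inf_le_right), fun U hU => ?_⟩
  exact (hp.trans inf_le_left) (Filter.preimage_mem_comap hU)

/-- p-compactness is productive. -/
lemma pi_plimit {ι X : Type*} [TopologicalSpace X] (p : Ultrafilter ℕ)
    (h : ∀ x : ℕ → X, ∃ l, IsPLimit p x l) (y : ℕ → ι → X) : ∃ l, IsPLimit p y l := by
  choose l hl using fun i => h (fun n => y n i)
  refine ⟨l, fun U hU => ?_⟩
  rw [nhds_pi, Filter.mem_pi] at hU
  obtain ⟨I, hIfin, t, ht, hsub⟩ := hU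
  have hmem : (⋂ i ∈ I, {n | y n i ∈ t i}) ∈ p :=
    (Filter.biInter_mem hIfin).mpr fun i _ => hl i (t i) (ht i)
  exact Filter.mem_of_superset hmem fun n hn =>
    hsub fun i hi => Set.mem_iInter₂.mp hn i hi

lemma cc_of_plimit {Z : Type*} [TopologicalSpace Z] [T1Space Z] {p : Ultrafilter ℕ}
    (hp : FreeUltrafilter p) (h : ∀ y : ℕ → Z, ∃ l, IsPLimit p y l) : CountablyCompact Z := by
  intro S hS
  let u := hS.natEmbedding
  obtain ⟨l, hl⟩ := h (fun n => (u n : Z))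
  refine ⟨l, accPt_iff_nhds.mpr fun U hU => ?_⟩
  obtain ⟨a, ha, b, hb, hab⟩ := (free_infinite hp (hl U hU)).nontrivial
  have huv : (u a : Z) ≠ (u b : Z) := fun h => hab (u.injective (Subtype.ext h))
  by_cases hla : (u a : Z) = l
  · exact ⟨(u b : Z), ⟨hb, (u b).2⟩, by rw [← hla]; exact huv.symm⟩
  · exact ⟨(u a : Z), ⟨ha, (u a).2⟩, hla⟩

lemma plimit_coord {ι X : Type*} [TopologicalSpace X] {p : Ultrafilter ℕ} {y : ℕ → ι → X}
    {l : ι → X} (h : IsPLimit p y l) (i : ι) : IsPLimit p (fun n => y n i) (l i) := by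
  intro U hU
  have : (fun g : ι → X => g i) ⁻¹' U ∈ nhds l := (continuous_apply i).continuousAt hU
  exact h _ this

lemma cc_congr {ι ι' : Type*} {X : Type*} [TopologicalSpace X] (e : ι ≃ ι')
    (h : CountablyCompact (ι → X)) : CountablyCompact (ι' → X) := by
  set f : (ι → X) → (ι' → X) := fun g => g ∘ e.symm with hf
  have hfc : Continuous f := continuous_pi fun i' => continuous_apply (e.symm i')
  have hfinj : Function.Injective f := fun g₁ g₂ hg => by
    funext i; have := congrFun hg (e i); simpa [hf, Function.comp] using this
  have hfsurj : Function.Surjective f := fun g => ⟨g ∘ e, by funext i'; simp [hf]⟩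
  intro S hS
  obtain ⟨x, hx⟩ := h (f ⁻¹' S) (hS.preimage (by rw [hfsurj.range_eq]; exact Set.subset_univ S))
  refine ⟨f x, accPt_iff_nhds.mpr fun U hU => ?_⟩
  obtain ⟨w, ⟨hwU, hwS⟩, hwx⟩ := accPt_iff_nhds.mp hx (f ⁻¹' U) (hfc.continuousAt hU)
  exact ⟨f w, ⟨hwU, hwS⟩, fun hc => hwx (hfinj hc)⟩
universe u

lemma ultra_embed : Nonempty (Ultrafilter ℕ ↪ ((2 ^ Cardinal.continuum : Cardinal.{u}).out)) := by
  rw [← Cardinal.lift_mk_le']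
  have h1 : Cardinal.mk (Ultrafilter ℕ) ≤ 2 ^ Cardinal.continuum := by
    calc Cardinal.mk (Ultrafilter ℕ) ≤ Cardinal.mk (Set (Set ℕ)) :=
          Cardinal.mk_le_of_injective (f := fun p => {s | s ∈ p}) (by
            intro p q h
            exact Ultrafilter.coe_injective (Filter.filter_eq (Set.ext fun s =>
              Set.ext_iff.mp h s)))
      _ = (2 : Cardinal) ^ ((2 : Cardinal) ^ Cardinal.aleph0) := by simp [Cardinal.mk_set]
      _ = 2 ^ Cardinal.continuum := by rw [Cardinal.two_power_aleph0]
  calc Cardinal.lift.{u} (Cardinal.mk (Ultrafilter ℕ))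
      ≤ Cardinal.lift.{u} (2 ^ Cardinal.continuum) := Cardinal.lift_le.mpr h1
    _ = 2 ^ Cardinal.continuum := by
        rw [Cardinal.lift_power, Cardinal.lift_continuum]; norm_num
    _ = Cardinal.lift.{0} (Cardinal.mk ((2 ^ Cardinal.continuum : Cardinal.{u}).out)) := by
        simp [Cardinal.mk_out]

lemma nonempty_equiv_pow {X : Type u} :
    Nonempty ((Cardinal.mk X ^ Cardinal.aleph0 : Cardinal.{u}).out ≃ (ℕ → X)) := by
  rw [← Cardinal.eq]
  simp [Cardinal.mk_out, Cardinal.mk_arrow]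

/-- the Ginsburg–Saks theorem characterizing when all powers of a Hausdorff
space are countably compact. -/
theorem stmt18 {X : Type u} [TopologicalSpace X] [T2Space X] :
    ((∀ ι : Type u, CountablyCompact (ι → X)) ↔
      CountablyCompact ((2 ^ Cardinal.continuum : Cardinal.{u}).out → X)) ∧
    ((∀ ι : Type u, CountablyCompact (ι → X)) ↔
      CountablyCompact ((Cardinal.mk X ^ Cardinal.aleph0 : Cardinal.{u}).out → X)) ∧
    ((∀ ι : Type u, CountablyCompact (ι → X)) ↔
      ∃ p : Ultrafilter ℕ, FreeUltrafilter p ∧ ∀ x : ℕ → X, ∃ l : X, IsPLimit p x l) := by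
  have hIV_I : (∃ p : Ultrafilter ℕ, FreeUltrafilter p ∧ ∀ x : ℕ → X, ∃ l, IsPLimit p x l) →
      ∀ ι : Type u, CountablyCompact (ι → X) := by
    rintro ⟨p, hp, hX⟩ ι
    exact cc_of_plimit hp (pi_plimit p hX)
  have hIII_IV : CountablyCompact ((Cardinal.mk X ^ Cardinal.aleph0 : Cardinal.{u}).out → X) →
      ∃ p : Ultrafilter ℕ, FreeUltrafilter p ∧ ∀ x : ℕ → X, ∃ l, IsPLimit p x l := by
    intro h
    obtain ⟨e⟩ := nonempty_equiv_pow (X := X)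
    obtain ⟨p, l, hp, hpl⟩ := exists_free_plimit h (fun n i => e i n)
    refine ⟨p, hp, fun f => ⟨l (e.symm f), ?_⟩⟩
    have := plimit_coord hpl (e.symm f)
    simpa using this
  have hII_IV : CountablyCompact ((2 ^ Cardinal.continuum : Cardinal.{u}).out → X) →
      ∃ p : Ultrafilter ℕ, FreeUltrafilter p ∧ ∀ x : ℕ → X, ∃ l, IsPLimit p x l := by
    intro h
    classical
    rcases isEmpty_or_nonempty X with hE | hNE
    · exact ⟨Filter.hyperfilter ℕ, free_of_le_cofinite Filter.hyperfilter_le_cofinite,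
        fun x => (hE.false (x 0)).elim⟩
    · by_contra hcon
      push_neg at hcon
      have hsel : ∀ p : Ultrafilter ℕ, ∃ x : ℕ → X, FreeUltrafilter p → ∀ l, ¬ IsPLimit p x l := by
        intro p
        by_cases hp : FreeUltrafilter p
        · obtain ⟨x, hx⟩ := hcon p hp
          exact ⟨x, fun _ => hx⟩
        · exact ⟨fun _ => Classical.arbitrary X, fun hpf => absurd hpf hp⟩
      choose xs hxs using hsel
      obtain ⟨e⟩ := ultra_embed.{u}
      set y : ℕ → (2 ^ Cardinal.continuum : Cardinal.{u}).out → X :=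
        fun n i => if hex : ∃ p, e p = i then xs hex.choose n else Classical.arbitrary X with hy
      obtain ⟨q, l, hq, hql⟩ := exists_free_plimit h y
      have hcoord := plimit_coord hql (e q)
      have heq : (fun n => y n (e q)) = xs q := by
        funext n
        have hex : ∃ p, e p = e q := ⟨q, rfl⟩
        have hch : hex.choose = q := e.injective hex.choose_spec
        simp [hy, dif_pos hex, hch]
      rw [heq] at hcoord
      exact hxs q hq (l (e q)) hcoord
  exact ⟨⟨fun h => h _, fun h => hIV_I (hII_IV h)⟩,
         ⟨fun h => h _, fun h => hIV_I (hIII_IV h)⟩,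
         ⟨fun h => hIII_IV (h _), hIV_I⟩⟩
end

section
/- Let X be a Tychonoff (completely regular Hausdorff) topological space. Then X is pseudocompact if and only if for every sequence (U_n)_{n∈ℕ} of nonempty open subsets of X there exist a point x ∈ X and a free ultrafilter p on ℕ such that for each neighborhood V of x, the set {n ∈ ℕ : V ∩ U_n ≠ ∅} belongs to p. -/
open Filter Topology

/-- An ultrafilter below the cofinite filter is free. -/
lemma freeUltrafilter_of_le_cofinite {p : Ultrafilter ℕ} (h : (p : Filter ℕ) ≤ cofinite) :
    FreeUltrafilter p := by
  intro n hn
  have h1 : ({n}ᶜ : Set ℕ) ∈ p := h (by simp [Filter.mem_cofinite])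
  rw [hn] at h1
  simp at h1

/-- Pseudocompactness gives a "cluster point" for any sequence of nonempty open sets. -/
lemma cluster_of_pseudocompact {X : Type*} [TopologicalSpace X] [CompletelyRegularSpace X]
    (hpc : Pseudocompact X) (U : ℕ → Set X) (hUo : ∀ n, IsOpen (U n))
    (hUne : ∀ n, (U n).Nonempty) :
    ∃ x : X, ∀ V ∈ nhds x, {n : ℕ | (V ∩ U n).Nonempty}.Infinite := by
  by_contra hcon
  push_neg at hcon
  have hLF : LocallyFinite U := by
    intro y
    obtain ⟨V, hV, hfin⟩ := hcon y
    exact ⟨V, hV, hfin.subset fun n hn => by rw [Set.mem_setOf_eq, Set.inter_comm] at hn; exact hn⟩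
  -- pick a point in each U n and a bump function
  choose x hx using hUne
  have hcr : ∀ n : ℕ, ∃ g : X → unitInterval, Continuous g ∧ g (x n) = 0 ∧
      Set.EqOn g 1 (U n)ᶜ := fun n =>
    CompletelyRegularSpace.completely_regular (x n) (U n)ᶜ (hUo n).isClosed_compl
      (by simp [hx n])
  choose g hgc hg0 hg1 using hcr
  set F : ℕ → X → ℝ := fun n y => (n : ℝ) * (1 - ((g n y : ℝ))) with hF
  have hFc : ∀ n, Continuous (F n) :=
    fun n => continuous_const.mul (continuous_const.sub
      (continuous_subtype_val.comp (hgc n)))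
  have hFsupp : ∀ n, Function.support (F n) ⊆ U n := by
    intro n y hy
    by_contra hyn
    have : g n y = 1 := hg1 n hyn
    apply hy
    simp [hF, this]
  have hFnonneg : ∀ n y, 0 ≤ F n y := by
    intro n y
    have h1 : ((g n y : ℝ)) ≤ 1 := (g n y).2.2
    have : (0 : ℝ) ≤ 1 - (g n y : ℝ) := by linarith
    positivity
  have hFLF : LocallyFinite fun n => Function.support (F n) := hLF.subset hFsupp
  set f : X → ℝ := fun y => ∑ᶠ n, F n y with hf
  have hfc : Continuous f := continuous_finsum hFc hFLF
  obtain ⟨M, hM⟩ := hpc f hfc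
  obtain ⟨n, hn⟩ := exists_nat_gt M
  have hfin : (Function.support fun m => F m (x n)).Finite :=
    (hLF.point_finite (x n)).subset fun m hm => hFsupp m hm
  have hge : (n : ℝ) ≤ f (x n) := by
    have h1 : F n (x n) ≤ ∑ᶠ m, F m (x n) :=
      single_le_finsum n hfin (fun m => hFnonneg m (x n))
    have h2 : F n (x n) = n := by simp [hF, hg0 n]
    rw [hf]; linarith
  have := hM (x n)
  have habs : f (x n) ≤ |f (x n)| := le_abs_self _
  linarith

/-- a Tychonoff space is pseudocompact iff every sequence of nonempty open
sets has a point `x` and a free ultrafilter `p` such that every neighborhood of `x` meets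
`U_n` for a `p`-large set of `n`. -/
theorem stmt19 {X : Type*} [TopologicalSpace X] [T2Space X] [CompletelyRegularSpace X] :
    Pseudocompact X ↔
      ∀ U : ℕ → Set X, (∀ n, IsOpen (U n)) → (∀ n, (U n).Nonempty) →
        ∃ (x : X) (p : Ultrafilter ℕ), FreeUltrafilter p ∧
          ∀ V ∈ nhds x, {n : ℕ | (V ∩ U n).Nonempty} ∈ p := by
  constructor
  · intro hpc U hUo hUne
    obtain ⟨x, hx⟩ := cluster_of_pseudocompact hpc U hUo hUne
    set A : Set X → Set ℕ := fun V => {n | (V ∩ U n).Nonempty} with hA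
    have hmono : Monotone A := by
      intro V W hVW n hn
      exact hn.mono (Set.inter_subset_inter_left _ hVW)
    set G : Filter ℕ := (nhds x).lift' A ⊓ Filter.cofinite with hG
    have hne : G.NeBot := by
      rw [hG, Filter.inf_neBot_iff]
      intro s hs t ht
      obtain ⟨V, hV, hVs⟩ := (Filter.mem_lift'_sets hmono).1 hs
      have hinf : (A V).Infinite := hx V hV
      have : (A V ∩ t).Nonempty := by
        have : (A V \ tᶜ).Infinite := hinf.diff (Filter.mem_cofinite.1 ht)
        obtain ⟨n, hn1, hn2⟩ := this.nonempty
        exact ⟨n, hn1, by simpa using hn2⟩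
      exact this.mono (Set.inter_subset_inter_left _ hVs)
    refine ⟨x, Ultrafilter.of G, ?_, ?_⟩
    · exact freeUltrafilter_of_le_cofinite ((Ultrafilter.of_le G).trans inf_le_right)
    · intro V hV
      exact Ultrafilter.of_le G (Filter.mem_inf_of_left (Filter.mem_lift' hV))
  · intro h f hfc
    by_contra hcon
    push_neg at hcon
    set U : ℕ → Set X := fun n => {y | (n : ℝ) < |f y|} with hU
    have hUo : ∀ n, IsOpen (U n) := fun n =>
      isOpen_lt continuous_const (continuous_abs.comp hfc)
    have hUne : ∀ n, (U n).Nonempty := by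
      intro n
      obtain ⟨y, hy⟩ := hcon n
      exact ⟨y, hy⟩
    obtain ⟨x, p, hpf, hp⟩ := h U hUo hUne
    have hVopen : IsOpen {y | |f y| < |f x| + 1} :=
      isOpen_lt (continuous_abs.comp hfc) continuous_const
    have hVmem : {y | |f y| < |f x| + 1} ∈ nhds x :=
      hVopen.mem_nhds (by simp)
    have hS : {n : ℕ | ({y | |f y| < |f x| + 1} ∩ U n).Nonempty} ∈ p := hp _ hVmem
    have hfin : {n : ℕ | ({y | |f y| < |f x| + 1} ∩ U n).Nonempty}.Finite := by
      apply (Set.finite_Iio (⌈|f x| + 1⌉₊)).subset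
      rintro n ⟨y, hy1, hy2⟩
      simp only [Set.mem_setOf_eq] at hy1 hy2
      exact Set.mem_Iio.2 (Nat.lt_ceil.2 (lt_trans hy2 hy1))
    obtain ⟨n, _, hpn⟩ := Ultrafilter.eq_pure_of_finite_mem hfin hS
    exact hpf n hpn
end
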